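/- arXiv:1109.3799 — 2 statements merged into one kernel-verified Lean document; each statement's English description precedes it below -/
import Mathlib

section
/- There exist Q > 0 symmetric, τ > 0, and a diagonal matrix T > 0 satisfying the block matrix inequality [[AQ + QA^T - τBB^T + γ²D₁TD₁^T, Q],[Q, -T]] < 0 if and only if there exist Q > 0, T > 0 diagonal, and K ∈ ℝ^{p×n} such that (A+BK)Q + Q(A+BK)^T + γ²D₁TD₁^T + QT^{-1}Q < 0. -/
/-!
With `T > 0`, the Schur complement turns the block inequality into `N + τ B Bᵀ > 0` and the
feedback inequality into `N - (B K Q + Q Kᵀ Bᵀ) > 0`, where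
`N = -(A Q + Q Aᵀ + γ² D₁ T D₁ᵀ + Q T⁻¹ Q)`. The gain `K = -(τ/2) Bᵀ Q⁻¹` makes the two
expressions equal. Conversely, completing the square gives, for `L = K Q` and every `ε > 0`,
`N + ε⁻¹ B Bᵀ ≥ N - (B L + Lᵀ Bᵀ) - ε Lᵀ L`, and the right-hand side stays positive definite
for small `ε` because positive definiteness is an open condition.
-/

open Matrix

namespace Matrix

variable {m n 𝕜 : Type*} [Fintype m] [Fintype n] [DecidableEq n] [RCLike 𝕜]

open scoped ComplexOrder

theorem posDef_fromBlocks₂₂_iff [DecidableEq m] (A : Matrix m m 𝕜) (B : Matrix m n 𝕜)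
    {D : Matrix n n 𝕜} (hD : D.PosDef) :
    (fromBlocks A B Bᴴ D).PosDef ↔ (A - B * D⁻¹ * Bᴴ).PosDef := by
  have := hD.isUnit.invertible
  have hdet : (fromBlocks A B Bᴴ D).det = D.det * (A - B * D⁻¹ * Bᴴ).det := by
    rw [det_fromBlocks₂₂, invOf_eq_nonsing_inv]
  constructor
  · intro h
    refine ((hD.fromBlocks₂₂ A B).mp h.posSemidef).posDef_iff_det_ne_zero.mpr ?_
    exact right_ne_zero_of_mul (hdet ▸ h.det_pos.ne')
  · intro h
    refine ((hD.fromBlocks₂₂ A B).mpr h.posSemidef).posDef_iff_det_ne_zero.mpr ?_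
    exact hdet ▸ mul_ne_zero hD.det_pos.ne' h.det_pos.ne'

theorem posDef_neg_fromBlocks_iff {M Q T : Matrix n n 𝕜} (hQ : Q.IsHermitian) (hT : T.PosDef) :
    (-fromBlocks M Q Q (-T)).PosDef ↔ (-(M + Q * T⁻¹ * Q)).PosDef := by
  have hblocks : -fromBlocks M Q Q (-T) = fromBlocks (-M) (-Q) (-Q)ᴴ T := by
    rw [fromBlocks_neg, neg_neg, conjTranspose_neg, hQ.eq]
  have hschur : -M - -Q * T⁻¹ * (-Q)ᴴ = -(M + Q * T⁻¹ * Q) := by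
    rw [conjTranspose_neg, hQ.eq]
    noncomm_ring
  rw [hblocks, posDef_fromBlocks₂₂_iff _ _ hT, hschur]

open scoped MatrixOrder in
theorem PosDef.exists_sub_smul_posDef {M S : Matrix n n 𝕜} (hM : M.PosDef) (hS : S.IsHermitian) :
    ∃ ε : ℝ, 0 < ε ∧ (M - ε • S).PosDef := by
  obtain _ | _ := subsingleton_or_nontrivial (Matrix n n 𝕜)
  · exact ⟨1, one_pos, by rwa [Subsingleton.elim (M - (1 : ℝ) • S) M]⟩
  obtain ⟨r, hr, hrM⟩ : ∃ r > 0, algebraMap ℝ _ r ≤ M :=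
    (CFC.exists_pos_algebraMap_le_iff hM.isHermitian.isSelfAdjoint).mpr
      fun _ hx => hM.isStrictlyPositive.spectrum_pos hx
  obtain ⟨c, hc⟩ := (spectrum ℝ S).toFinite.bddAbove
  have hSc : S ≤ algebraMap ℝ _ c := le_algebraMap_of_spectrum_le hc hS.isSelfAdjoint
  set ε := r / (|c| + 1)
  have hε₀ : 0 < ε := by positivity
  have hεc : 0 < r - ε * c := by
    have : ε * (|c| + 1) = r := div_mul_cancel₀ r (by positivity)
    nlinarith [le_abs_self c]
  have hsplit : M - ε • S = (r - ε * c) • (1 : Matrix n n 𝕜) +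
      ((M - algebraMap ℝ _ r) + ε • (algebraMap ℝ _ c - S)) := by
    simp only [Algebra.algebraMap_eq_smul_one]
    module
  refine ⟨ε, hε₀, hsplit ▸ ?_⟩
  exact (PosDef.one.smul hεc).add_posSemidef
    ((le_iff.mp hrM).add ((le_iff.mp hSc).smul hε₀.le))

theorem exists_posDef_add_smul_of_posDef_sub {N : Matrix n n 𝕜} (B : Matrix n m 𝕜)
    (L : Matrix m n 𝕜) (h : (N - (B * L + Lᴴ * Bᴴ)).PosDef) :
    ∃ τ : ℝ, 0 < τ ∧ (N + τ • (B * Bᴴ)).PosDef := by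
  obtain ⟨ε, hε, hpos⟩ := h.exists_sub_smul_posDef (isHermitian_conjTranspose_mul_self L)
  refine ⟨ε⁻¹, inv_pos.mpr hε, ?_⟩
  have hsquare : N + ε⁻¹ • (B * Bᴴ) = (N - (B * L + Lᴴ * Bᴴ) - ε • (Lᴴ * L)) +
      ε⁻¹ • ((Bᴴ + ε • L)ᴴ * (Bᴴ + ε • L)) := by
    simp only [conjTranspose_add, conjTranspose_smul, conjTranspose_conjTranspose, star_trivial,
      Matrix.add_mul, Matrix.mul_add, Matrix.smul_mul, Matrix.mul_smul]
    match_scalars <;> field_simp <;> ring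
  rw [hsquare]
  exact hpos.add_posSemidef ((posSemidef_conjTranspose_mul_self _).smul (inv_nonneg.mpr hε.le))

theorem exists_posDef_add_smul_iff_exists_gain {N Q : Matrix n n 𝕜} (B : Matrix n m 𝕜)
    (hQ : Q.PosDef) :
    (∃ τ : ℝ, 0 < τ ∧ (N + τ • (B * Bᴴ)).PosDef) ↔
      ∃ K : Matrix m n 𝕜, (N - (B * K * Q + Q * (B * K)ᴴ)).PosDef := by
  have hdet : IsUnit Q.det := (isUnit_iff_isUnit_det Q).mp hQ.isUnit
  have hQQ : Q⁻¹ * Q = 1 := nonsing_inv_mul Q hdet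
  have hQQ' : Q * Q⁻¹ = 1 := mul_nonsing_inv Q hdet
  constructor
  · rintro ⟨τ, -, hτ⟩
    refine ⟨-((τ / 2) • (Bᴴ * Q⁻¹)), ?_⟩
    have hgain : B * -((τ / 2) • (Bᴴ * Q⁻¹)) * Q + Q * (B * -((τ / 2) • (Bᴴ * Q⁻¹)))ᴴ =
        -(τ • (B * Bᴴ)) := by
      simp only [conjTranspose_neg, conjTranspose_smul, conjTranspose_mul, conjTranspose_nonsing_inv,
        conjTranspose_conjTranspose, hQ.1.eq, star_trivial, Matrix.mul_neg, Matrix.neg_mul,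
        Matrix.mul_smul, Matrix.smul_mul, Matrix.mul_assoc, hQQ, ← Matrix.mul_assoc Q, hQQ',
        Matrix.mul_one, Matrix.one_mul]
      module
    rwa [hgain, sub_neg_eq_add]
  · rintro ⟨K, hK⟩
    refine exists_posDef_add_smul_of_posDef_sub B (K * Q) ?_
    simpa only [conjTranspose_mul, hQ.1.eq, Matrix.mul_assoc] using hK

end Matrix

theorem lipschitz_lmi_iff_feedback_general
    {n p : ℕ} (A : Matrix (Fin n) (Fin n) ℝ) (B : Matrix (Fin n) (Fin p) ℝ)
    (D₁ : Matrix (Fin n) (Fin n) ℝ) (γ : ℝ) :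
    (∃ (Q T : Matrix (Fin n) (Fin n) ℝ) (τ : ℝ) (d : Fin n → ℝ),
      Q.PosDef ∧ 0 < τ ∧ T = Matrix.diagonal d ∧ T.PosDef ∧
      (-(Matrix.fromBlocks
          (A * Q + Q * Aᵀ - τ • (B * Bᵀ) + (γ ^ 2) • (D₁ * T * D₁ᵀ)) Q
          Q (-T))).PosDef) ↔
    (∃ (Q T : Matrix (Fin n) (Fin n) ℝ) (d : Fin n → ℝ)
        (K : Matrix (Fin p) (Fin n) ℝ),
      Q.PosDef ∧ T = Matrix.diagonal d ∧ T.PosDef ∧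
      (-((A + B * K) * Q + Q * (A + B * K)ᵀ + (γ ^ 2) • (D₁ * T * D₁ᵀ) +
          Q * T⁻¹ * Q)).PosDef) := by
  set N : Matrix (Fin n) (Fin n) ℝ → Matrix (Fin n) (Fin n) ℝ → Matrix (Fin n) (Fin n) ℝ :=
    fun Q T => -(A * Q + Q * Aᵀ + (γ ^ 2) • (D₁ * T * D₁ᵀ) + Q * T⁻¹ * Q)
  have hmultiplier (Q T : Matrix (Fin n) (Fin n) ℝ) (τ : ℝ) :
      -(A * Q + Q * Aᵀ - τ • (B * Bᵀ) + (γ ^ 2) • (D₁ * T * D₁ᵀ) + Q * T⁻¹ * Q) =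
        N Q T + τ • (B * Bᴴ) := by
    simp only [N, conjTranspose_eq_transpose_of_trivial]
    abel
  have hgain (Q T : Matrix (Fin n) (Fin n) ℝ) (K : Matrix (Fin p) (Fin n) ℝ) :
      -((A + B * K) * Q + Q * (A + B * K)ᵀ + (γ ^ 2) • (D₁ * T * D₁ᵀ) + Q * T⁻¹ * Q) =
        N Q T - (B * K * Q + Q * (B * K)ᴴ) := by
    simp only [N, conjTranspose_eq_transpose_of_trivial, transpose_add, Matrix.add_mul,
      Matrix.mul_add]
    abel
  constructor
  · rintro ⟨Q, T, τ, d, hQ, hτ, rfl, hT, hLMI⟩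
    rw [posDef_neg_fromBlocks_iff hQ.1 hT, hmultiplier] at hLMI
    obtain ⟨K, hK⟩ := (exists_posDef_add_smul_iff_exists_gain B hQ).mp ⟨τ, hτ, hLMI⟩
    exact ⟨Q, _, d, K, hQ, rfl, hT, hgain Q _ K ▸ hK⟩
  · rintro ⟨Q, T, d, K, hQ, rfl, hT, hK⟩
    obtain ⟨τ, hτ, hN⟩ := (exists_posDef_add_smul_iff_exists_gain B hQ).mpr ⟨K, hgain Q _ K ▸ hK⟩
    refine ⟨Q, _, τ, d, hQ, hτ, rfl, hT, ?_⟩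
    rwa [posDef_neg_fromBlocks_iff hQ.1 hT, hmultiplier]

/-- There exist `Q > 0` symmetric, `τ > 0`, and a diagonal `T > 0` with
`[[A Q + Q Aᵀ - τ B Bᵀ + γ² D₁ T D₁ᵀ, Q], [Q, -T]] < 0` iff there exist `Q > 0`,
diagonal `T > 0`, and `K` with
`(A + B K) Q + Q (A + B K)ᵀ + γ² D₁ T D₁ᵀ + Q T⁻¹ Q < 0`. -/
theorem lipschitz_lmi_iff_feedback
    {n p : ℕ} (A : Matrix (Fin n) (Fin n) ℝ) (B : Matrix (Fin n) (Fin p) ℝ)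
    (D₁ : Matrix (Fin n) (Fin n) ℝ) (γ : ℝ) (hγ : 0 < γ) :
    (∃ (Q T : Matrix (Fin n) (Fin n) ℝ) (τ : ℝ) (d : Fin n → ℝ),
      Q.PosDef ∧ 0 < τ ∧ T = Matrix.diagonal d ∧ T.PosDef ∧
      (-(Matrix.fromBlocks
          (A * Q + Q * Aᵀ - τ • (B * Bᵀ) + (γ ^ 2) • (D₁ * T * D₁ᵀ)) Q
          Q (-T))).PosDef) ↔
    (∃ (Q T : Matrix (Fin n) (Fin n) ℝ) (d : Fin n → ℝ)
        (K : Matrix (Fin p) (Fin n) ℝ),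
      Q.PosDef ∧ T = Matrix.diagonal d ∧ T.PosDef ∧
      (-((A + B * K) * Q + Q * (A + B * K)ᵀ + (γ ^ 2) • (D₁ * T * D₁ᵀ) +
          Q * T⁻¹ * Q)).PosDef) :=
  lipschitz_lmi_iff_feedback_general A B D₁ γ
end

section
/- Consider the single-integrator special case: A = 0, B = I_n, P = I_n, so F = -I_n and Γ = I_n. Under the adaptive protocol ẋ_i = -Σ_j c_{ij} a_{ij}(x_i - x_j), ċ_{ij} = κ_{ij} a_{ij} ‖x_i - x_j‖², with G connected undirected, κ_{ij} = κ_{ji} > 0, c_{ij}(0) = c_{ji}(0), the function V(t) = Σ_i ‖x_i(t) - x̄(t)‖² + Σ_{i≠j} (c_{ij}(t) - α)²/(2κ_{ij}) is non-increasing for α ≥ 1/λ₂, where λ₂ is the smallest nonzero Laplacian eigenvalue and x̄ = (1/N)Σ_j x_j. -/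
/-!
With `u_i = x_i - x̄` and `w_{ij} = ‖x_i - x_j‖²`, the gains stay symmetric (they start symmetric
and have symmetric derivatives), so symmetrising the double sum gives
`2 Σ_i u_i ⬝ ẋ_i = -Σ_{i,j} c_{ij} a_{ij} w_{ij}`, while `x̄` drops out because `Σ_i u_i = 0`.
The gain part of `V` contributes `Σ_{i,j} (c_{ij} - α) a_{ij} w_{ij}`, so
`V̇ = -α Σ_{i,j} a_{ij} w_{ij} ≤ 0`.
-/

open Finset

variable {𝕜 ι m : Type*}

theorem HasDerivAt.dotProduct [NontriviallyNormedField 𝕜] [Fintype ι] {u v : 𝕜 → ι → 𝕜}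
    {u' v' : ι → 𝕜} {t : 𝕜} (hu : HasDerivAt u u' t) (hv : HasDerivAt v v' t) :
    HasDerivAt (fun s => u s ⬝ᵥ v s) (u' ⬝ᵥ v t + u t ⬝ᵥ v') t :=
  (HasDerivAt.fun_sum fun i (_ : i ∈ univ) =>
    (hasDerivAt_pi.1 hu i).fun_mul (hasDerivAt_pi.1 hv i)).congr_deriv
      (by rw [sum_add_distrib]; rfl)

theorem HasDerivAt.sub_sq_div_two_mul {f : ℝ → ℝ} {k d α t : ℝ} (hk : k ≠ 0)
    (hf : HasDerivAt f (k * d) t) :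
    HasDerivAt (fun s => (f s - α) ^ 2 / (2 * k)) ((f t - α) * d) t := by
  refine (((hf.sub_const α).pow 2).div_const (2 * k)).congr_deriv ?_
  field_simp
  ring

theorem eqOn_Ici_of_hasDerivAt_eq {E : Type*} [NormedAddCommGroup E] [NormedSpace ℝ E]
    {f g f' : ℝ → E} {a : ℝ} (hf : ∀ t, a ≤ t → HasDerivAt f (f' t) t)
    (hg : ∀ t, a ≤ t → HasDerivAt g (f' t) t) (ha : f a = g a) : Set.EqOn f g (Set.Ici a) :=
  fun t ht => eq_of_has_deriv_right_eq (fun s hs => (hf s hs.1).hasDerivWithinAt)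
    (fun s hs => (hg s hs.1).hasDerivWithinAt)
    (fun s hs => (hf s hs.1).continuousAt.continuousWithinAt)
    (fun s hs => (hg s hs.1).continuousAt.continuousWithinAt) ha t ⟨ht, le_rfl⟩

theorem sum_sub_card_inv_smul_sum [DivisionRing 𝕜] [CharZero 𝕜] [Fintype ι] {E : Type*}
    [AddCommGroup E] [Module 𝕜 E] (x : ι → E) :
    ∑ i, (x i - (Fintype.card ι : 𝕜)⁻¹ • ∑ j, x j) = 0 := by
  rcases isEmpty_or_nonempty ι with hι | hι
  · simp
  · rw [sum_sub_distrib, sum_const, card_univ, ← Nat.cast_smul_eq_nsmul 𝕜, smul_smul,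
      mul_inv_cancel₀ (Nat.cast_ne_zero.2 Fintype.card_ne_zero), one_smul, sub_self]

theorem hasDerivAt_sum_dotProduct_sub_mean [Fintype ι] [Fintype m] {x : ι → ℝ → m → ℝ}
    {x' : ι → m → ℝ} {xbar : ℝ → m → ℝ} {t : ℝ}
    (hxbar : ∀ s, xbar s = (Fintype.card ι : ℝ)⁻¹ • ∑ j, x j s)
    (hx : ∀ i, HasDerivAt (x i) (x' i) t) :
    HasDerivAt (fun s => ∑ i, (x i s - xbar s) ⬝ᵥ (x i s - xbar s))
      (2 * ∑ i, (x i t - xbar t) ⬝ᵥ x' i) t := by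
  set xbar' := (Fintype.card ι : ℝ)⁻¹ • ∑ j, x' j
  have hxbar' : HasDerivAt xbar xbar' t := by
    rw [funext hxbar]
    exact (HasDerivAt.fun_sum fun j _ => hx j).const_smul (Fintype.card ι : ℝ)⁻¹
  have hmean : ∑ i, (x i t - xbar t) = 0 := by
    rw [hxbar]
    exact sum_sub_card_inv_smul_sum _
  refine (HasDerivAt.fun_sum fun i (_ : i ∈ univ) =>
    ((hx i).sub hxbar').dotProduct ((hx i).sub hxbar')).congr_deriv ?_
  calc _ = 2 * ∑ i, (x i t - xbar t) ⬝ᵥ (x' i - xbar') := by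
        rw [mul_sum]
        refine sum_congr rfl fun i _ => ?_
        rw [Pi.sub_apply, dotProduct_comm]
        ring
    _ = 2 * ∑ i, (x i t - xbar t) ⬝ᵥ x' i := by
        simp only [dotProduct_sub, sum_sub_distrib, ← sum_dotProduct, hmean, zero_dotProduct,
          sub_zero]

theorem two_mul_sum_dotProduct_sum_smul_sub [CommRing 𝕜] [Fintype ι] [Fintype m]
    {b : ι → ι → 𝕜} (hb : ∀ i j, b i j = b j i) (u x : ι → m → 𝕜) :
    2 * ∑ i, u i ⬝ᵥ ∑ j, b i j • (x i - x j) =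
      ∑ i, ∑ j, b i j * ((u i - u j) ⬝ᵥ (x i - x j)) := by
  have hexpand : ∑ i, u i ⬝ᵥ ∑ j, b i j • (x i - x j) =
      ∑ i, ∑ j, b i j * (u i ⬝ᵥ (x i - x j)) := by
    simp only [dotProduct_sum, dotProduct_smul, smul_eq_mul]
  have hswap : ∑ i, ∑ j, b i j * (u i ⬝ᵥ (x i - x j)) =
      ∑ i, ∑ j, b i j * (-u j ⬝ᵥ (x i - x j)) := by
    rw [sum_comm]
    refine sum_congr rfl fun i _ => sum_congr rfl fun j _ => ?_
    rw [hb, ← neg_sub (x i), dotProduct_neg, neg_dotProduct]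
  rw [hexpand, two_mul]
  nth_rewrite 2 [hswap]
  rw [← sum_add_distrib]
  refine sum_congr rfl fun i _ => ?_
  rw [← sum_add_distrib]
  refine sum_congr rfl fun j _ => ?_
  rw [sub_eq_add_neg (u i), add_dotProduct]
  ring

theorem adaptive_lyapunov_derivative_eq [Fintype ι] [DecidableEq ι] [Fintype m]
    {a c : ι → ι → ℝ} (hsymm : ∀ i j, c i j * a i j = c j i * a j i) (α : ℝ) (x u : ι → m → ℝ)
    (hu : ∀ i j, u i - u j = x i - x j) :
    2 * ∑ i, u i ⬝ᵥ -(∑ j, (c i j * a i j) • (x i - x j)) +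
        ∑ i, ∑ j ∈ univ.erase i, (c i j - α) * (a i j * ((x i - x j) ⬝ᵥ (x i - x j))) =
      -(α * ∑ i, ∑ j, a i j * ((x i - x j) ⬝ᵥ (x i - x j))) := by
  have hcross : 2 * ∑ i, u i ⬝ᵥ -(∑ j, (c i j * a i j) • (x i - x j)) =
      -∑ i, ∑ j, c i j * a i j * ((x i - x j) ⬝ᵥ (x i - x j)) := by
    simp only [dotProduct_neg, sum_neg_distrib, mul_neg, two_mul_sum_dotProduct_sum_smul_sub hsymm,
      hu]
  have hdiag : ∀ i, ∑ j ∈ univ.erase i, (c i j - α) * (a i j * ((x i - x j) ⬝ᵥ (x i - x j))) =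
      ∑ j, (c i j - α) * (a i j * ((x i - x j) ⬝ᵥ (x i - x j))) :=
    fun i => sum_erase univ (by simp)
  rw [hcross, sum_congr rfl fun i _ => hdiag i]
  simp only [mul_sum, ← sum_neg_distrib, ← sum_add_distrib]
  refine sum_congr rfl fun i _ => sum_congr rfl fun j _ => ?_
  ring

theorem single_integrator_adaptive_lyapunov_nonincreasing_general
    {N n : ℕ}
    (G : SimpleGraph (Fin N)) [DecidableRel G.Adj]
    (κ : Fin N → Fin N → ℝ) (hκpos : ∀ i j, 0 < κ i j)
    (hκsymm : ∀ i j, κ i j = κ j i)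
    (c : Fin N → Fin N → ℝ → ℝ) (hc0 : ∀ i j, c i j 0 = c j i 0)
    (x : Fin N → ℝ → Fin n → ℝ)
    (hxode : ∀ i, ∀ t : ℝ, 0 ≤ t →
      HasDerivAt (x i)
        (-(∑ j, (c i j t * G.adjMatrix ℝ i j) • (x i t - x j t))) t)
    (hcode : ∀ i j, ∀ t : ℝ, 0 ≤ t →
      HasDerivAt (c i j)
        (κ i j * G.adjMatrix ℝ i j * ((x i t - x j t) ⬝ᵥ (x i t - x j t))) t)
    (lam2 : ℝ) (hlam2pos : 0 < lam2)
    (α : ℝ) (hα : 1 / lam2 ≤ α)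
    (xbar : ℝ → Fin n → ℝ) (hxbar : ∀ t, xbar t = (N : ℝ)⁻¹ • ∑ j, x j t)
    (V : ℝ → ℝ)
    (hV : ∀ t, V t = (∑ i, (x i t - xbar t) ⬝ᵥ (x i t - xbar t)) +
      ∑ i, ∑ j ∈ Finset.univ.erase i, (c i j t - α) ^ 2 / (2 * κ i j)) :
    ∀ s t : ℝ, 0 ≤ s → s ≤ t → V t ≤ V s := by
  have hα0 : 0 ≤ α := (one_div_pos.2 hlam2pos).le.trans hα
  have hadj : ∀ i j, G.adjMatrix ℝ i j = G.adjMatrix ℝ j i :=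
    fun i j => G.isSymm_adjMatrix.apply j i
  have hgain : ∀ i j, ∀ t, 0 ≤ t → c i j t = c j i t := fun i j t ht =>
    eqOn_Ici_of_hasDerivAt_eq (hcode i j) (fun s hs => (hcode j i s hs).congr_deriv (by
      rw [hκsymm, hadj, ← neg_sub (x i s), neg_dotProduct, dotProduct_neg, neg_neg])) (hc0 i j) ht
  have hderiv : ∀ t, 0 ≤ t → HasDerivAt V
      (-(α * ∑ i, ∑ j, G.adjMatrix ℝ i j * ((x i t - x j t) ⬝ᵥ (x i t - x j t)))) t := by
    intro t ht
    rw [funext hV, ← adaptive_lyapunov_derivative_eq (a := G.adjMatrix ℝ) (c := fun i j => c i j t)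
      (fun i j => by rw [hgain i j t ht, hadj]) α (fun i => x i t) (fun i => x i t - xbar t)
      fun i j => sub_sub_sub_cancel_right _ _ _]
    exact (hasDerivAt_sum_dotProduct_sub_mean (by simpa only [Fintype.card_fin] using hxbar)
      fun i => hxode i t ht).add <| HasDerivAt.fun_sum fun i _ => HasDerivAt.fun_sum fun j _ =>
        HasDerivAt.sub_sq_div_two_mul (hκpos i j).ne' <| by
          simpa only [mul_assoc] using hcode i j t ht
  have hanti : AntitoneOn V (Set.Ici 0) :=
    antitoneOn_of_hasDerivWithinAt_nonpos (convex_Ici 0)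
      (fun t ht => (hderiv t ht).continuousAt.continuousWithinAt)
      (fun t ht => (hderiv t (interior_subset ht)).hasDerivWithinAt)
      fun t _ => neg_nonpos.2 <| mul_nonneg hα0 <| sum_nonneg fun i _ => sum_nonneg fun j _ =>
        mul_nonneg (by rw [SimpleGraph.adjMatrix_apply]; split_ifs <;> norm_num)
          (sum_nonneg fun k _ => mul_self_nonneg _)
  exact fun s t hs hst => hanti hs (hs.trans hst) hst

/-- Single-integrator special case (`A = 0`, `B = I`, `P = I`, `F = -I`, `Γ = I`):
under the adaptive protocol `ẋ_i = -Σ_j c_{ij} a_{ij} (x_i - x_j)`,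
`ċ_{ij} = κ_{ij} a_{ij} ‖x_i - x_j‖²`, with `G` connected undirected,
`κ_{ij} = κ_{ji} > 0`, `c_{ij}(0) = c_{ji}(0)`, the Lyapunov function
`V(t) = Σ_i ‖x_i - x̄‖² + Σ_{i ≠ j} (c_{ij} - α)²/(2 κ_{ij})` is non-increasing on
`[0, ∞)` whenever `α ≥ 1/λ₂`, where `λ₂` is the smallest nonzero Laplacian
eigenvalue and `x̄ = (1/N) Σ_j x_j`. -/
theorem single_integrator_adaptive_lyapunov_nonincreasing
    {N n : ℕ} (hN : 0 < N)
    (G : SimpleGraph (Fin N)) [DecidableRel G.Adj] (hconn : G.Connected)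
    (κ : Fin N → Fin N → ℝ) (hκpos : ∀ i j, 0 < κ i j)
    (hκsymm : ∀ i j, κ i j = κ j i)
    (c : Fin N → Fin N → ℝ → ℝ) (hc0 : ∀ i j, c i j 0 = c j i 0)
    (x : Fin N → ℝ → Fin n → ℝ)
    (hxode : ∀ i, ∀ t : ℝ, 0 ≤ t →
      HasDerivAt (x i)
        (-(∑ j, (c i j t * G.adjMatrix ℝ i j) • (x i t - x j t))) t)
    (hcode : ∀ i j, ∀ t : ℝ, 0 ≤ t →
      HasDerivAt (c i j)
        (κ i j * G.adjMatrix ℝ i j * ((x i t - x j t) ⬝ᵥ (x i t - x j t))) t)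
    (lam2 : ℝ) (hlam2pos : 0 < lam2)
    (hlam2 : ∀ v : Fin N → ℝ, (∑ i, v i) = 0 →
      lam2 * (v ⬝ᵥ v) ≤ v ⬝ᵥ (G.lapMatrix ℝ).mulVec v)
    (α : ℝ) (hα : 1 / lam2 ≤ α)
    (xbar : ℝ → Fin n → ℝ) (hxbar : ∀ t, xbar t = (N : ℝ)⁻¹ • ∑ j, x j t)
    (V : ℝ → ℝ)
    (hV : ∀ t, V t = (∑ i, (x i t - xbar t) ⬝ᵥ (x i t - xbar t)) +
      ∑ i, ∑ j ∈ Finset.univ.erase i, (c i j t - α) ^ 2 / (2 * κ i j)) :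
    ∀ s t : ℝ, 0 ≤ s → s ≤ t → V t ≤ V s :=
  single_integrator_adaptive_lyapunov_nonincreasing_general G κ hκpos hκsymm c hc0 x hxode hcode
    lam2 hlam2pos α hα xbar hxbar V hV
end
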